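/- arXiv:1610.08030 — 2 statements merged into one kernel-verified Lean document; each statement's English description precedes it below -/
import Mathlib

section
/- For any real s ≥ 0, any positive function r on a finite alphabet 𝒳 with E[r(X)] < ∞, and any positive auxiliary channel metric q, the rate R(X,Y,q,r,s) = E[log₂( q(Y,X)^s r(X) / E_{X'}[q(Y,X')^s r(X')] )] is at most the mutual information I(X;Y), where X' is an independent copy of X. -/
open Finset Real

/-- Probability that the random variable `X` takes value `x`, under pmf `p` on `Ω`. -/
noncomputable def pr {Ω α : Type*} [Fintype Ω] [DecidableEq α]
    (p : Ω → ℝ) (X : Ω → α) (x : α) : ℝ :=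
  ∑ ω, if X ω = x then p ω else 0

/-- Shannon entropy (in bits) of the random variable `X`. -/
noncomputable def ent {Ω α : Type*} [Fintype Ω] [Fintype α] [DecidableEq α]
    (p : Ω → ℝ) (X : Ω → α) : ℝ :=
  -∑ x, pr p X x * Real.logb 2 (pr p X x)

/-- Mutual information (in bits) `I(X;Z) = H(X) + H(Z) - H(X,Z)`. -/
noncomputable def mi {Ω α β : Type*} [Fintype Ω] [Fintype α] [Fintype β]
    [DecidableEq α] [DecidableEq β] (p : Ω → ℝ) (X : Ω → α) (Z : Ω → β) : ℝ :=
  ent p X + ent p Z - ent p (fun ω => (X ω, Z ω))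

lemma gibbs_term (t a : ℝ) (ht : 0 < t) (ha : 0 < a) :
    t * Real.logb 2 (a / t) ≤ (a - t) / Real.log 2 := by
  have hl2 : 0 < Real.log 2 := Real.log_pos one_lt_two
  have hlt : Real.log (a / t) ≤ a / t - 1 := Real.log_le_sub_one_of_pos (by positivity)
  rw [Real.logb, div_eq_mul_inv]
  calc t * (Real.log (a/t) * (Real.log 2)⁻¹)
      ≤ t * ((a/t - 1) * (Real.log 2)⁻¹) := by gcongr
    _ = (a - t) / Real.log 2 := by field_simp

/-- For `s ≥ 0`, positive `r`, and positive metric `q`, the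
mismatched-decoding rate `R(X,Y,q,r,s)` is at most the mutual information `I(X;Y)`.
The joint distribution of `(X,Y)` is given by the pmf `p` on `𝒳 × 𝒴`. -/
theorem lm_rate_le_mutual_info {𝒳 𝒴 : Type*} [Fintype 𝒳] [Fintype 𝒴]
    [DecidableEq 𝒳] [DecidableEq 𝒴]
    (p : 𝒳 × 𝒴 → ℝ) (hp : ∀ ω, 0 ≤ p ω) (hsum : ∑ ω, p ω = 1)
    (q : 𝒴 → 𝒳 → ℝ) (hq : ∀ y x, 0 < q y x)
    (r : 𝒳 → ℝ) (hr : ∀ x, 0 < r x)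
    (s : ℝ) (hs : 0 ≤ s) :
    (∑ ω, p ω * Real.logb 2 ((q ω.2 ω.1) ^ s * r ω.1 /
        ∑ x, pr p Prod.fst x * (q ω.2 x) ^ s * r x))
      ≤ mi p Prod.fst Prod.snd := by
  classical
  have hl2 : 0 < Real.log 2 := Real.log_pos one_lt_two
  set pX : 𝒳 → ℝ := pr p Prod.fst with hpXd
  set pY : 𝒴 → ℝ := pr p Prod.snd with hpYd
  have hpXeq : ∀ x, pX x = ∑ y, p (x, y) := by
    intro x
    simp [hpXd, pr, Fintype.sum_prod_type_right, Finset.sum_ite_eq']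
  have hpYeq : ∀ y, pY y = ∑ x, p (x, y) := by
    intro y
    simp [hpYd, pr, Fintype.sum_prod_type, Finset.sum_ite_eq']
  have hpXnn : ∀ x, 0 ≤ pX x := fun x => by
    rw [hpXeq]; exact Finset.sum_nonneg fun _ _ => hp _
  have hpYnn : ∀ y, 0 ≤ pY y := fun y => by
    rw [hpYeq]; exact Finset.sum_nonneg fun _ _ => hp _
  have hpXsum : ∑ x, pX x = 1 := by
    rw [← hsum, Fintype.sum_prod_type]
    exact Finset.sum_congr rfl fun x _ => hpXeq x
  have hpYsum : ∑ y, pY y = 1 := by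
    rw [← hsum, Fintype.sum_prod_type_right]
    exact Finset.sum_congr rfl fun y _ => hpYeq y
  have hpleX : ∀ x y, p (x, y) ≤ pX x := by
    intro x y
    rw [hpXeq]
    exact Finset.single_le_sum (fun b _ => hp (x, b)) (Finset.mem_univ y)
  have hpleY : ∀ x y, p (x, y) ≤ pY y := by
    intro x y
    rw [hpYeq]
    exact Finset.single_le_sum (fun a _ => hp (a, y)) (Finset.mem_univ x)
  set Q : 𝒴 → ℝ := fun y => ∑ x, pX x * q y x ^ s * r x with hQd
  have hQpos : ∀ y, 0 < Q y := by
    intro y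
    have hex : ∃ x, 0 < pX x := by
      by_contra h
      push_neg at h
      have : ∀ x, pX x = 0 := fun x => le_antisymm (h x) (hpXnn x)
      simp [this] at hpXsum
    obtain ⟨x0, hx0⟩ := hex
    refine Finset.sum_pos' (fun x _ => ?_) ⟨x0, Finset.mem_univ x0, ?_⟩
    · exact mul_nonneg (mul_nonneg (hpXnn x) (Real.rpow_nonneg (hq y x).le s)) (hr x).le
    · have hq0 := hq y x0; have hr0 := hr x0; positivity
  set A : 𝒳 × 𝒴 → ℝ := fun ω => pX ω.1 * pY ω.2 * q ω.2 ω.1 ^ s * r ω.1 / Q ω.2 with hAd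
  have hAnn : ∀ ω, 0 ≤ A ω := by
    intro ω
    have h1 := hpXnn ω.1; have h2 := hpYnn ω.2
    have h3 := (hq ω.2 ω.1); have h4 := hr ω.1; have h5 := hQpos ω.2
    simp only [hAd]
    positivity
  have hAsum : ∑ ω, A ω = 1 := by
    rw [Fintype.sum_prod_type_right]
    have inner : ∀ y, (∑ x, A (x, y)) = pY y := by
      intro y
      have h1 : ∀ x, A (x, y) = (pY y / Q y) * (pX x * q y x ^ s * r x) := by
        intro x
        simp only [hAd]
        ring
      rw [Finset.sum_congr rfl fun x _ => h1 x, ← Finset.mul_sum]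
      rw [show (∑ x, pX x * q y x ^ s * r x) = Q y from rfl]
      rw [div_mul_cancel₀ _ (ne_of_gt (hQpos y))]
    rw [Finset.sum_congr rfl fun y _ => inner y, hpYsum]
  have hmi : mi p Prod.fst Prod.snd =
      ∑ ω, p ω * Real.logb 2 (p ω) - ∑ ω, p ω * Real.logb 2 (pX ω.1)
        - ∑ ω, p ω * Real.logb 2 (pY ω.2) := by
    have hprPair : ∀ z : 𝒳 × 𝒴, pr p (fun ω => (Prod.fst ω, Prod.snd ω)) z = p z := by
      intro z
      simp [pr, Finset.sum_ite_eq']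
    have hX : ∑ ω : 𝒳 × 𝒴, p ω * Real.logb 2 (pX ω.1) = ∑ x, pX x * Real.logb 2 (pX x) := by
      simp only [Fintype.sum_prod_type]
      refine Finset.sum_congr rfl fun x _ => ?_
      rw [← Finset.sum_mul, ← hpXeq]
    have hY : ∑ ω : 𝒳 × 𝒴, p ω * Real.logb 2 (pY ω.2) = ∑ y, pY y * Real.logb 2 (pY y) := by
      simp only [Fintype.sum_prod_type_right]
      refine Finset.sum_congr rfl fun y _ => ?_
      rw [← Finset.sum_mul, ← hpYeq]
    simp only [mi, ent, ← hpXd, ← hpYd]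
    rw [hX, hY]
    have : ∑ z : 𝒳 × 𝒴, pr p (fun ω => (Prod.fst ω, Prod.snd ω)) z *
        Real.logb 2 (pr p (fun ω => (Prod.fst ω, Prod.snd ω)) z)
        = ∑ ω, p ω * Real.logb 2 (p ω) := by
      refine Finset.sum_congr rfl fun z _ => by rw [hprPair]
    rw [this]
    ring
  have hterm : ∀ ω : 𝒳 × 𝒴,
      p ω * Real.logb 2 (q ω.2 ω.1 ^ s * r ω.1 / Q ω.2) ≤
        p ω * Real.logb 2 (p ω) - p ω * Real.logb 2 (pX ω.1)
          - p ω * Real.logb 2 (pY ω.2) + (A ω - p ω) / Real.log 2 := by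
    rintro ⟨x, y⟩
    by_cases h0 : p (x, y) = 0
    · simp only [h0, zero_mul, sub_zero, zero_sub, neg_zero, zero_add, sub_zero]
      have := hAnn (x, y)
      positivity
    · have hppos : 0 < p (x, y) := lt_of_le_of_ne (hp _) (Ne.symm h0)
      have hpXpos : 0 < pX x := lt_of_lt_of_le hppos (hpleX x y)
      have hpYpos : 0 < pY y := lt_of_lt_of_le hppos (hpleY x y)
      have hQp := hQpos y
      have hqp := hq y x
      have hrp := hr x
      have hApos : 0 < A (x, y) := by
        simp only [hAd]; positivity
      have key := gibbs_term (p (x, y)) (A (x, y)) hppos hApos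
      have hsplit : Real.logb 2 (A (x, y) / p (x, y)) =
          Real.logb 2 (pX x) + Real.logb 2 (pY y)
            + Real.logb 2 (q y x ^ s * r x / Q y) - Real.logb 2 (p (x, y)) := by
        have hrw : A (x, y) / p (x, y) =
            pX x * (pY y * ((q y x ^ s * r x / Q y) * (p (x, y))⁻¹)) := by
          simp only [hAd]
          field_simp
        rw [hrw, Real.logb_mul (ne_of_gt hpXpos), Real.logb_mul (ne_of_gt hpYpos),
          Real.logb_mul, Real.logb_inv]
        · ring
        · positivity
        · positivity
        · positivity
        · positivity
      rw [hsplit] at key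
      nlinarith [key]
  calc (∑ ω, p ω * Real.logb 2 ((q ω.2 ω.1) ^ s * r ω.1 /
        ∑ x, pX x * (q ω.2 x) ^ s * r x))
      ≤ ∑ ω : 𝒳 × 𝒴, (p ω * Real.logb 2 (p ω) - p ω * Real.logb 2 (pX ω.1)
          - p ω * Real.logb 2 (pY ω.2) + (A ω - p ω) / Real.log 2) :=
        Finset.sum_le_sum fun ω _ => hterm ω
    _ = mi p Prod.fst Prod.snd := by
        rw [hmi]
        rw [Finset.sum_add_distrib, Finset.sum_sub_distrib, Finset.sum_sub_distrib,
          ← Finset.sum_div, Finset.sum_sub_distrib, hAsum, hsum]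
        simp
end

section
/- With the basic polar transform (U₁,U₂ independent uniform bits, X₁ = U₁ ⊕ U₂, X₂ = U₂ sent through independent binary-input channels with outputs Y₁, Y₂), we have I(U₁; Y₁Y₂) ≤ min(I(X₁;Y₁), I(X₂;Y₂)) ≤ max(I(X₁;Y₁), I(X₂;Y₂)) ≤ I(U₂; Y₁Y₂U₁). -/
open Finset Real

section PolarTransform

variable {𝒴₁ 𝒴₂ : Type*} [Fintype 𝒴₁] [Fintype 𝒴₂] [DecidableEq 𝒴₁] [DecidableEq 𝒴₂]

/-- Joint pmf of `(U₁, U₂, Y₁, Y₂)` for the basic polar transform: `U₁, U₂` independent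
uniform bits, `X₁ = U₁ ⊕ U₂` sent through `W₁`, `X₂ = U₂` sent through `W₂`, with `Y₁, Y₂`
conditionally independent given the inputs. -/
noncomputable def polarPmf (W₁ : Fin 2 → 𝒴₁ → ℝ) (W₂ : Fin 2 → 𝒴₂ → ℝ)
    (ω : Fin 2 × Fin 2 × 𝒴₁ × 𝒴₂) : ℝ :=
  (1 / 4) * W₁ (ω.1 + ω.2.1) ω.2.2.1 * W₂ ω.2.1 ω.2.2.2

end PolarTransform

set_option linter.unusedSectionVars false
set_option linter.unusedVariables false

section aux
variable {Ω α β γ : Type*} [Fintype Ω] [Fintype α] [Fintype β] [Fintype γ]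
  [DecidableEq α] [DecidableEq β] [DecidableEq γ]

lemma pr_nonneg (p : Ω → ℝ) (hp : ∀ ω, 0 ≤ p ω) (X : Ω → α) (x : α) : 0 ≤ pr p X x :=
  Finset.sum_nonneg fun ω _ => by by_cases h : X ω = x <;> simp [pr, h, hp ω]

lemma sum_pr (p : Ω → ℝ) (X : Ω → α) : ∑ x, pr p X x = ∑ ω, p ω := by
  unfold pr
  rw [Finset.sum_comm]
  exact Finset.sum_congr rfl fun ω _ => by simp

lemma pr_pair_fst (p : Ω → ℝ) (X : Ω → α) (Z : Ω → β) (b : β) :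
    ∑ a, pr p (fun ω => (X ω, Z ω)) (a, b) = pr p Z b := by
  unfold pr
  rw [Finset.sum_comm]
  exact Finset.sum_congr rfl fun ω _ => by
    by_cases h : Z ω = b <;> simp [Prod.ext_iff, h]

lemma pr_comp (p : Ω → ℝ) (X : Ω → α) (g : α → β) (y : β) :
    pr p (fun ω => g (X ω)) y = ∑ x ∈ Finset.univ.filter (fun x => g x = y), pr p X x := by
  unfold pr
  rw [Finset.sum_comm]
  refine Finset.sum_congr rfl fun ω _ => ?_
  by_cases h : g (X ω) = y
  · rw [if_pos h,
      Finset.sum_eq_single_of_mem (X ω) (by simp [h]) (fun b _ hb => if_neg (fun hc => hb hc.symm)),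
      if_pos rfl]
  · rw [if_neg h, Finset.sum_eq_zero]
    intro x hx
    rw [if_neg]
    rintro rfl
    exact h (Finset.mem_filter.1 hx).2

lemma pr_pair_comp (p : Ω → ℝ) (X : Ω → α) (Z : Ω → β) (f : β → γ) (a : α) (c : γ) :
    pr p (fun ω => (X ω, f (Z ω))) (a, c)
      = ∑ b ∈ Finset.univ.filter (fun b => f b = c), pr p (fun ω => (X ω, Z ω)) (a, b) := by
  unfold pr
  rw [Finset.sum_comm]
  refine Finset.sum_congr rfl fun ω _ => ?_
  by_cases hx : X ω = a
  · by_cases h : f (Z ω) = c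
    · rw [if_pos (by simp [hx, h]),
        Finset.sum_eq_single_of_mem (Z ω) (by simp [h])
          (fun b _ hb => if_neg (fun hc => hb (congrArg Prod.snd hc).symm)),
        if_pos (by simp [hx])]
    · rw [if_neg (by simp [Prod.ext_iff]; tauto), Finset.sum_eq_zero]
      intro b hb
      rw [if_neg]
      intro hh
      have h2 : Z ω = b := congrArg Prod.snd hh
      exact h (h2 ▸ (Finset.mem_filter.1 hb).2)
  · rw [if_neg (by simp [Prod.ext_iff]; tauto), Finset.sum_eq_zero]
    intro b hb
    rw [if_neg]
    intro hh
    exact hx (congrArg Prod.fst hh)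

lemma pr_comp_inj (p : Ω → ℝ) (X : Ω → α) (g : α → β) (hg : Function.Injective g) (a : α) :
    pr p (fun ω => g (X ω)) (g a) = pr p X a := by
  unfold pr; exact Finset.sum_congr rfl fun ω _ => by simp [hg.eq_iff]

lemma ent_comp_inj (p : Ω → ℝ) (X : Ω → α) (g : α → β) (hg : Function.Injective g) :
    ent p (fun ω => g (X ω)) = ent p X := by
  unfold ent
  congr 1
  rw [← Finset.sum_subset (Finset.subset_univ ((Finset.univ : Finset α).image g))]
  · rw [Finset.sum_image (fun a _ a' _ h => hg h)]
    exact Finset.sum_congr rfl fun a _ => by rw [pr_comp_inj p X g hg]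
  · intro y _ hy
    have : pr p (fun ω => g (X ω)) y = 0 := by
      apply Finset.sum_eq_zero
      intro ω _
      rw [if_neg]
      intro h
      exact hy (Finset.mem_image.2 ⟨X ω, Finset.mem_univ _, h⟩)
    simp [this]

lemma ent_pair_of_indep (p : Ω → ℝ) (hp : ∀ ω, 0 ≤ p ω) (hsum : ∑ ω, p ω = 1)
    (X : Ω → α) (Z : Ω → β)
    (h : ∀ a b, pr p (fun ω => (X ω, Z ω)) (a, b) = pr p X a * pr p Z b) :
    ent p (fun ω => (X ω, Z ω)) = ent p X + ent p Z := by
  have hX1 : ∑ a, pr p X a = 1 := by rw [sum_pr]; exact hsum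
  have hZ1 : ∑ b, pr p Z b = 1 := by rw [sum_pr]; exact hsum
  unfold ent
  rw [Fintype.sum_prod_type]
  have key : ∀ a b, pr p (fun ω => (X ω, Z ω)) (a, b)
        * logb 2 (pr p (fun ω => (X ω, Z ω)) (a, b))
      = (pr p X a * logb 2 (pr p X a)) * pr p Z b
        + pr p X a * (pr p Z b * logb 2 (pr p Z b)) := by
    intro a b
    rw [h]
    rcases eq_or_ne (pr p X a) 0 with h0 | h0
    · simp [h0]
    rcases eq_or_ne (pr p Z b) 0 with h1 | h1
    · simp [h1]
    rw [Real.logb_mul h0 h1]; ring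
  have : (∑ a, ∑ b, pr p (fun ω => (X ω, Z ω)) (a, b)
        * logb 2 (pr p (fun ω => (X ω, Z ω)) (a, b)))
      = (∑ a, pr p X a * logb 2 (pr p X a)) * (∑ b, pr p Z b)
        + (∑ a, pr p X a) * (∑ b, pr p Z b * logb 2 (pr p Z b)) := by
    rw [Finset.sum_mul, Finset.sum_mul]
    rw [← Finset.sum_add_distrib]
    refine Finset.sum_congr rfl fun a _ => ?_
    rw [Finset.mul_sum, Finset.mul_sum, ← Finset.sum_add_distrib]
    exact Finset.sum_congr rfl fun b _ => key a b
  rw [this, hX1, hZ1]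
  ring

lemma ent_eq_log (p : Ω → ℝ) (X : Ω → α) :
    ent p X = -((∑ x, pr p X x * Real.log (pr p X x)) / Real.log 2) := by
  unfold ent
  rw [Finset.sum_div]
  congr 1
  exact Finset.sum_congr rfl fun x _ => by rw [Real.logb]; ring

set_option maxHeartbeats 1000000 in
lemma cond_ent_le (p : Ω → ℝ) (hp : ∀ ω, 0 ≤ p ω) (hsum : ∑ ω, p ω = 1)
    (X : Ω → α) (Z : Ω → β) (f : β → γ) :
    ent p (fun ω => (X ω, Z ω)) - ent p Z
      ≤ ent p (fun ω => (X ω, f (Z ω))) - ent p (fun ω => f (Z ω)) := by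
  have L2 : (0:ℝ) < Real.log 2 := Real.log_pos (by norm_num)
  -- abbreviations
  have hj0 : ∀ a b, 0 ≤ pr p (fun ω => (X ω, Z ω)) (a, b) :=
    fun a b => pr_nonneg p hp _ _
  have hm_eq : ∀ b, pr p Z b = ∑ a, pr p (fun ω => (X ω, Z ω)) (a, b) :=
    fun b => (pr_pair_fst p X Z b).symm
  have hm'_eq : ∀ c, pr p (fun ω => f (Z ω)) c = ∑ a, pr p (fun ω => (X ω, f (Z ω))) (a, c) :=
    fun c => (pr_pair_fst p X (fun ω => f (Z ω)) c).symm
  have hj'_eq : ∀ a c, pr p (fun ω => (X ω, f (Z ω))) (a, c)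
      = ∑ b ∈ Finset.univ.filter (fun b => f b = c), pr p (fun ω => (X ω, Z ω)) (a, b) :=
    fun a c => pr_pair_comp p X Z f a c
  have hmm'_eq : ∀ c, pr p (fun ω => f (Z ω)) c
      = ∑ b ∈ Finset.univ.filter (fun b => f b = c), pr p Z b :=
    fun c => pr_comp p Z f c
  have hm0 : ∀ b, 0 ≤ pr p Z b := fun b => pr_nonneg p hp _ _
  have hj'0 : ∀ a c, 0 ≤ pr p (fun ω => (X ω, f (Z ω))) (a, c) := fun a c => pr_nonneg p hp _ _
  have hm'0 : ∀ c, 0 ≤ pr p (fun ω => f (Z ω)) c := fun c => pr_nonneg p hp _ _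
  have hjm : ∀ a b, pr p (fun ω => (X ω, Z ω)) (a, b) ≤ pr p Z b := by
    intro a b
    rw [hm_eq b]
    exact Finset.single_le_sum (fun a' _ => hj0 a' b) (Finset.mem_univ a)
  have hjj' : ∀ a b, pr p (fun ω => (X ω, Z ω)) (a, b)
      ≤ pr p (fun ω => (X ω, f (Z ω))) (a, f b) := by
    intro a b
    rw [hj'_eq a (f b)]
    exact Finset.single_le_sum (fun b' _ => hj0 a b') (by simp)
  have hmm'le : ∀ b, pr p Z b ≤ pr p (fun ω => f (Z ω)) (f b) := by
    intro b
    rw [hmm'_eq (f b)]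
    exact Finset.single_le_sum (fun b' _ => hm0 b') (by simp)
  -- rewriting steps
  have step1 : ∑ b, pr p Z b * Real.log (pr p Z b)
      = ∑ a, ∑ b, pr p (fun ω => (X ω, Z ω)) (a, b) * Real.log (pr p Z b) := by
    rw [Finset.sum_comm]
    refine Finset.sum_congr rfl fun b _ => ?_
    rw [hm_eq b, Finset.sum_mul]
  have step2 : ∑ a, ∑ c, pr p (fun ω => (X ω, f (Z ω))) (a, c)
        * Real.log (pr p (fun ω => (X ω, f (Z ω))) (a, c))
      = ∑ a, ∑ b, pr p (fun ω => (X ω, Z ω)) (a, b)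
        * Real.log (pr p (fun ω => (X ω, f (Z ω))) (a, f b)) := by
    refine Finset.sum_congr rfl fun a _ => ?_
    rw [← Finset.sum_fiberwise Finset.univ f
      (fun b => pr p (fun ω => (X ω, Z ω)) (a, b)
        * Real.log (pr p (fun ω => (X ω, f (Z ω))) (a, f b)))]
    refine Finset.sum_congr rfl fun c _ => ?_
    rw [Finset.sum_congr rfl (fun b hb =>
      (by rw [(Finset.mem_filter.1 hb).2] :
        pr p (fun ω => (X ω, Z ω)) (a, b)
            * Real.log (pr p (fun ω => (X ω, f (Z ω))) (a, f b))
          = pr p (fun ω => (X ω, Z ω)) (a, b)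
            * Real.log (pr p (fun ω => (X ω, f (Z ω))) (a, c)))),
      ← Finset.sum_mul, ← hj'_eq a c]
  have step3 : ∑ c, pr p (fun ω => f (Z ω)) c * Real.log (pr p (fun ω => f (Z ω)) c)
      = ∑ a, ∑ b, pr p (fun ω => (X ω, Z ω)) (a, b)
        * Real.log (pr p (fun ω => f (Z ω)) (f b)) := by
    have h1 : ∑ c, pr p (fun ω => f (Z ω)) c * Real.log (pr p (fun ω => f (Z ω)) c)
        = ∑ b, pr p Z b * Real.log (pr p (fun ω => f (Z ω)) (f b)) := by
      rw [← Finset.sum_fiberwise Finset.univ f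
        (fun b => pr p Z b * Real.log (pr p (fun ω => f (Z ω)) (f b)))]
      refine Finset.sum_congr rfl fun c _ => ?_
      rw [Finset.sum_congr rfl (fun b hb =>
        (by rw [(Finset.mem_filter.1 hb).2] :
          pr p Z b * Real.log (pr p (fun ω => f (Z ω)) (f b))
            = pr p Z b * Real.log (pr p (fun ω => f (Z ω)) c))),
        ← Finset.sum_mul, ← hmm'_eq c]
    rw [h1, Finset.sum_comm]
    refine Finset.sum_congr rfl fun b _ => ?_
    rw [hm_eq b, Finset.sum_mul]
  -- termwise bound
  have termb : ∀ a b,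
      pr p (fun ω => (X ω, Z ω)) (a, b)
          * Real.log (pr p (fun ω => (X ω, f (Z ω))) (a, f b))
        + pr p (fun ω => (X ω, Z ω)) (a, b) * Real.log (pr p Z b)
        - (pr p (fun ω => (X ω, Z ω)) (a, b) * Real.log (pr p (fun ω => (X ω, Z ω)) (a, b))
          + pr p (fun ω => (X ω, Z ω)) (a, b) * Real.log (pr p (fun ω => f (Z ω)) (f b)))
      ≤ (if pr p (fun ω => f (Z ω)) (f b) = 0 then 0
          else pr p Z b * pr p (fun ω => (X ω, f (Z ω))) (a, f b) / pr p (fun ω => f (Z ω)) (f b))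
        - pr p (fun ω => (X ω, Z ω)) (a, b) := by
    intro a b
    rcases eq_or_lt_of_le (hj0 a b) with hj | hj
    · rw [← hj]
      simp only [zero_mul, add_zero, sub_zero, zero_add, sub_self]
      ring_nf
      by_cases hc : pr p (fun ω => f (Z ω)) (f b) = 0
      · simp [hc]
      · rw [if_neg hc]
        have := hm0 b
        have := hj'0 a (f b)
        have : (0:ℝ) < pr p (fun ω => f (Z ω)) (f b) :=
          lt_of_le_of_ne (hm'0 (f b)) (Ne.symm hc)
        positivity
    · have hmb : 0 < pr p Z b := lt_of_lt_of_le hj (hjm a b)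
      have hj'pos : 0 < pr p (fun ω => (X ω, f (Z ω))) (a, f b) :=
        lt_of_lt_of_le hj (hjj' a b)
      have hm'pos : 0 < pr p (fun ω => f (Z ω)) (f b) := lt_of_lt_of_le hmb (hmm'le b)
      rw [if_neg hm'pos.ne']
      set J := pr p (fun ω => (X ω, Z ω)) (a, b) with hJ
      set M := pr p Z b with hM
      set J' := pr p (fun ω => (X ω, f (Z ω))) (a, f b) with hJ'
      set M' := pr p (fun ω => f (Z ω)) (f b) with hM'
      have ht : (0:ℝ) < M * J' / M' / J := by positivity
      have hlog := Real.log_le_sub_one_of_pos ht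
      have h2 : J * Real.log (M * J' / M' / J) ≤ M * J' / M' - J := by
        have := mul_le_mul_of_nonneg_left hlog (le_of_lt hj)
        calc J * Real.log (M * J' / M' / J) ≤ J * (M * J' / M' / J - 1) := this
          _ = M * J' / M' - J := by field_simp
      have h3 : Real.log (M * J' / M' / J)
          = Real.log M + Real.log J' - Real.log M' - Real.log J := by
        rw [Real.log_div (by positivity) hj.ne', Real.log_div (by positivity) hm'pos.ne',
          Real.log_mul hmb.ne' hj'pos.ne']
      calc J * Real.log J' + J * Real.log M - (J * Real.log J + J * Real.log M')
          = J * Real.log (M * J' / M' / J) := by rw [h3]; ring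
        _ ≤ M * J' / M' - J := h2
  -- sum of the bound
  have sumj : ∑ a, ∑ b, pr p (fun ω => (X ω, Z ω)) (a, b) = 1 := by
    rw [Finset.sum_comm]
    calc ∑ b, ∑ a, pr p (fun ω => (X ω, Z ω)) (a, b) = ∑ b, pr p Z b :=
          Finset.sum_congr rfl fun b _ => pr_pair_fst p X Z b
      _ = 1 := by rw [sum_pr]; exact hsum
  have sumβ : ∑ a, ∑ b, (if pr p (fun ω => f (Z ω)) (f b) = 0 then 0
        else pr p Z b * pr p (fun ω => (X ω, f (Z ω))) (a, f b)
          / pr p (fun ω => f (Z ω)) (f b)) ≤ 1 := by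
    rw [Finset.sum_comm]
    have hb' : ∀ b, ∑ a, (if pr p (fun ω => f (Z ω)) (f b) = 0 then 0
        else pr p Z b * pr p (fun ω => (X ω, f (Z ω))) (a, f b)
          / pr p (fun ω => f (Z ω)) (f b)) ≤ pr p Z b := by
      intro b
      by_cases hc : pr p (fun ω => f (Z ω)) (f b) = 0
      · simp [hc, hm0 b]
      · simp only [if_neg hc]
        have : ∑ a, pr p Z b * pr p (fun ω => (X ω, f (Z ω))) (a, f b)
            / pr p (fun ω => f (Z ω)) (f b)
            = pr p Z b * (∑ a, pr p (fun ω => (X ω, f (Z ω))) (a, f b))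
              / pr p (fun ω => f (Z ω)) (f b) := by
          rw [Finset.mul_sum, Finset.sum_div]
        rw [this, ← hm'_eq (f b), mul_div_assoc, div_self hc, mul_one]
    calc _ ≤ ∑ b, pr p Z b := Finset.sum_le_sum fun b _ => hb' b
      _ = 1 := by rw [sum_pr]; exact hsum
  -- main inequality in log form
  have main : (∑ a, ∑ c, pr p (fun ω => (X ω, f (Z ω))) (a, c)
          * Real.log (pr p (fun ω => (X ω, f (Z ω))) (a, c)))
        + (∑ b, pr p Z b * Real.log (pr p Z b))
      ≤ (∑ a, ∑ b, pr p (fun ω => (X ω, Z ω)) (a, b)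
          * Real.log (pr p (fun ω => (X ω, Z ω)) (a, b)))
        + (∑ c, pr p (fun ω => f (Z ω)) c * Real.log (pr p (fun ω => f (Z ω)) c)) := by
    rw [step1, step2, step3]
    have expand : (∑ a, ∑ b, pr p (fun ω => (X ω, Z ω)) (a, b)
          * Real.log (pr p (fun ω => (X ω, f (Z ω))) (a, f b)))
        + (∑ a, ∑ b, pr p (fun ω => (X ω, Z ω)) (a, b) * Real.log (pr p Z b))
        - ((∑ a, ∑ b, pr p (fun ω => (X ω, Z ω)) (a, b)
            * Real.log (pr p (fun ω => (X ω, Z ω)) (a, b)))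
          + (∑ a, ∑ b, pr p (fun ω => (X ω, Z ω)) (a, b)
            * Real.log (pr p (fun ω => f (Z ω)) (f b))))
        = ∑ a, ∑ b,
            (pr p (fun ω => (X ω, Z ω)) (a, b)
                * Real.log (pr p (fun ω => (X ω, f (Z ω))) (a, f b))
              + pr p (fun ω => (X ω, Z ω)) (a, b) * Real.log (pr p Z b)
              - (pr p (fun ω => (X ω, Z ω)) (a, b)
                  * Real.log (pr p (fun ω => (X ω, Z ω)) (a, b))
                + pr p (fun ω => (X ω, Z ω)) (a, b)
                  * Real.log (pr p (fun ω => f (Z ω)) (f b)))) := by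
      simp only [← Finset.sum_add_distrib, ← Finset.sum_sub_distrib]
    have hle : (∑ a, ∑ b,
            (pr p (fun ω => (X ω, Z ω)) (a, b)
                * Real.log (pr p (fun ω => (X ω, f (Z ω))) (a, f b))
              + pr p (fun ω => (X ω, Z ω)) (a, b) * Real.log (pr p Z b)
              - (pr p (fun ω => (X ω, Z ω)) (a, b)
                  * Real.log (pr p (fun ω => (X ω, Z ω)) (a, b))
                + pr p (fun ω => (X ω, Z ω)) (a, b)
                  * Real.log (pr p (fun ω => f (Z ω)) (f b))))) ≤ 0 := by
      calc _ ≤ ∑ a, ∑ b, ((if pr p (fun ω => f (Z ω)) (f b) = 0 then 0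
            else pr p Z b * pr p (fun ω => (X ω, f (Z ω))) (a, f b)
              / pr p (fun ω => f (Z ω)) (f b))
            - pr p (fun ω => (X ω, Z ω)) (a, b)) :=
          Finset.sum_le_sum fun a _ => Finset.sum_le_sum fun b _ => termb a b
        _ = (∑ a, ∑ b, (if pr p (fun ω => f (Z ω)) (f b) = 0 then 0
            else pr p Z b * pr p (fun ω => (X ω, f (Z ω))) (a, f b)
              / pr p (fun ω => f (Z ω)) (f b)))
            - ∑ a, ∑ b, pr p (fun ω => (X ω, Z ω)) (a, b) := by
          simp only [← Finset.sum_sub_distrib]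
        _ ≤ 1 - 1 := by rw [sumj]; exact sub_le_sub_right sumβ 1
        _ = 0 := by norm_num
    linarith [expand ▸ hle]
  -- convert to ent form
  rw [ent_eq_log p (fun ω => (X ω, Z ω)), ent_eq_log p Z,
    ent_eq_log p (fun ω => (X ω, f (Z ω))), ent_eq_log p (fun ω => f (Z ω))]
  rw [Fintype.sum_prod_type (f := fun x => pr p (fun ω => (X ω, Z ω)) x
      * Real.log (pr p (fun ω => (X ω, Z ω)) x)),
    Fintype.sum_prod_type (f := fun x => pr p (fun ω => (X ω, f (Z ω))) x
      * Real.log (pr p (fun ω => (X ω, f (Z ω))) x))]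
  set A := ∑ x : α, ∑ y : β, pr p (fun ω => (X ω, Z ω)) (x, y)
      * Real.log (pr p (fun ω => (X ω, Z ω)) (x, y)) with hA
  set B := ∑ x : β, pr p Z x * Real.log (pr p Z x) with hB
  set A' := ∑ x : α, ∑ y : γ, pr p (fun ω => (X ω, f (Z ω))) (x, y)
      * Real.log (pr p (fun ω => (X ω, f (Z ω))) (x, y)) with hA'
  set B' := ∑ x : γ, pr p (fun ω => f (Z ω)) x * Real.log (pr p (fun ω => f (Z ω)) x) with hB'
  have h2 : (A' + B) / Real.log 2 ≤ (A + B') / Real.log 2 :=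
    (div_le_div_iff_of_pos_right L2).mpr main
  rw [add_div, add_div] at h2
  linarith

end aux

lemma sum_ite_const {ι : Type*} [Fintype ι] (c : Prop) [Decidable c] (f : ι → ℝ) :
    ∑ i, (if c then f i else 0) = if c then (∑ i, f i) else 0 := by
  split <;> simp

section Polar
variable {𝒴₁ 𝒴₂ : Type*} [Fintype 𝒴₁] [Fintype 𝒴₂] [DecidableEq 𝒴₁] [DecidableEq 𝒴₂]
  (W₁ : Fin 2 → 𝒴₁ → ℝ) (W₂ : Fin 2 → 𝒴₂ → ℝ)

lemma fin2_cast : ((2 : Fin 2) = 0) ∧ ((0:Fin 2) + 0 = 0) ∧ ((0:Fin 2) + 1 = 1)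
    ∧ ((1:Fin 2) + 0 = 1) ∧ ((1:Fin 2) + 1 = 0) := by decide

lemma pr_Y1 (hW₂sum : ∀ x, ∑ y, W₂ x y = 1) (y : 𝒴₁) :
    pr (polarPmf W₁ W₂) (fun ω => ω.2.2.1) y = (W₁ 0 y + W₁ 1 y) / 2 := by
  unfold pr polarPmf
  simp only [Fintype.sum_prod_type, sum_ite_const, Finset.sum_ite_eq', Finset.mem_univ,
    if_true]
  simp only [Fin.sum_univ_two, ← Finset.mul_sum, hW₂sum, mul_one, fin2_cast.1,
    fin2_cast.2.1, fin2_cast.2.2.1, fin2_cast.2.2.2.1, fin2_cast.2.2.2.2]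
  ring

lemma pr_Y2 (hW₁sum : ∀ x, ∑ y, W₁ x y = 1) (y : 𝒴₂) :
    pr (polarPmf W₁ W₂) (fun ω => ω.2.2.2) y = (W₂ 0 y + W₂ 1 y) / 2 := by
  unfold pr polarPmf
  simp only [Fintype.sum_prod_type, sum_ite_const, Finset.sum_ite_eq', Finset.mem_univ,
    if_true]
  simp only [← Finset.sum_mul, ← Finset.mul_sum, hW₁sum]
  simp only [Fin.sum_univ_two, fin2_cast.1,
    fin2_cast.2.1, fin2_cast.2.2.1, fin2_cast.2.2.2.1, fin2_cast.2.2.2.2, hW₁sum]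
  ring_nf

lemma pr_YY (hW₁sum : ∀ x, ∑ y, W₁ x y = 1) (hW₂sum : ∀ x, ∑ y, W₂ x y = 1)
    (y₁ : 𝒴₁) (y₂ : 𝒴₂) :
    pr (polarPmf W₁ W₂) (fun ω => (ω.2.2.1, ω.2.2.2)) (y₁, y₂)
      = ((W₁ 0 y₁ + W₁ 1 y₁) / 2) * ((W₂ 0 y₂ + W₂ 1 y₂) / 2) := by
  unfold pr polarPmf
  simp only [Fintype.sum_prod_type, Prod.mk.injEq, ite_and, sum_ite_const,
    Finset.sum_ite_eq', Finset.mem_univ, if_true]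
  simp only [Fin.sum_univ_two, fin2_cast.1,
    fin2_cast.2.1, fin2_cast.2.2.1, fin2_cast.2.2.2.1, fin2_cast.2.2.2.2]
  ring

lemma pr_X1Y1 (hW₂sum : ∀ x, ∑ y, W₂ x y = 1) (x : Fin 2) (y : 𝒴₁) :
    pr (polarPmf W₁ W₂) (fun ω => (ω.1 + ω.2.1, ω.2.2.1)) (x, y) = W₁ x y / 2 := by
  unfold pr polarPmf
  simp only [Fintype.sum_prod_type, Prod.mk.injEq, ite_and, sum_ite_const,
    Finset.sum_ite_eq', Finset.mem_univ, if_true]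
  simp only [Fin.sum_univ_two, ← Finset.mul_sum, hW₂sum, mul_one]
  fin_cases x <;>
    simp [fin2_cast.1, fin2_cast.2.1, fin2_cast.2.2.1, fin2_cast.2.2.2.1,
      fin2_cast.2.2.2.2] <;> ring

lemma pr_U2Y2 (hW₁sum : ∀ x, ∑ y, W₁ x y = 1) (u : Fin 2) (y : 𝒴₂) :
    pr (polarPmf W₁ W₂) (fun ω => (ω.2.1, ω.2.2.2)) (u, y) = W₂ u y / 2 := by
  unfold pr polarPmf
  simp only [Fintype.sum_prod_type, Prod.mk.injEq, ite_and, sum_ite_const,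
    Finset.sum_ite_eq', Finset.mem_univ, if_true]
  simp only [← Finset.sum_mul, ← Finset.mul_sum, hW₁sum]
  fin_cases u <;>
    simp [Fin.sum_univ_two, fin2_cast.1, fin2_cast.2.1, fin2_cast.2.2.1, fin2_cast.2.2.2.1,
      fin2_cast.2.2.2.2, hW₁sum] <;> ring_nf

lemma pr_big (u : Fin 2) (x : Fin 2) (y₁ : 𝒴₁) (y₂ : 𝒴₂) :
    pr (polarPmf W₁ W₂) (fun ω => ((ω.1 + ω.2.1, ω.2.2.1), (ω.2.1, ω.2.2.2))) ((x, y₁), (u, y₂))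
      = (W₁ x y₁ / 2) * (W₂ u y₂ / 2) := by
  unfold pr polarPmf
  simp only [Fintype.sum_prod_type, Prod.mk.injEq, ite_and, sum_ite_const,
    Finset.sum_ite_eq', Finset.mem_univ, if_true]
  fin_cases x <;> fin_cases u <;>
    simp [Fin.sum_univ_two, fin2_cast.1, fin2_cast.2.1, fin2_cast.2.2.1, fin2_cast.2.2.2.1,
      fin2_cast.2.2.2.2] <;> ring

lemma pr_U1 (hW₁sum : ∀ x, ∑ y, W₁ x y = 1) (hW₂sum : ∀ x, ∑ y, W₂ x y = 1) (u : Fin 2) :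
    pr (polarPmf W₁ W₂) (fun ω => ω.1) u = 1 / 2 := by
  unfold pr polarPmf
  simp only [Fintype.sum_prod_type, sum_ite_const, Finset.sum_ite_eq', Finset.mem_univ,
    if_true]
  simp only [← Finset.sum_mul, ← Finset.mul_sum, hW₂sum, hW₁sum, mul_one]
  simp only [Fin.sum_univ_two, fin2_cast.1,
    fin2_cast.2.1, fin2_cast.2.2.1, fin2_cast.2.2.2.1, fin2_cast.2.2.2.2, hW₁sum]
  ring_nf

lemma pr_U2 (hW₁sum : ∀ x, ∑ y, W₁ x y = 1) (hW₂sum : ∀ x, ∑ y, W₂ x y = 1) (u : Fin 2) :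
    pr (polarPmf W₁ W₂) (fun ω => ω.2.1) u = 1 / 2 := by
  unfold pr polarPmf
  simp only [Fintype.sum_prod_type, sum_ite_const, Finset.sum_ite_eq', Finset.mem_univ,
    if_true]
  simp only [← Finset.sum_mul, ← Finset.mul_sum, hW₂sum, hW₁sum, mul_one]
  fin_cases u <;>
    simp only [Fin.sum_univ_two, fin2_cast.1,
      fin2_cast.2.1, fin2_cast.2.2.1, fin2_cast.2.2.2.1, fin2_cast.2.2.2.2, hW₁sum] <;>
    ring_nf

lemma pr_X1 (hW₁sum : ∀ x, ∑ y, W₁ x y = 1) (hW₂sum : ∀ x, ∑ y, W₂ x y = 1) (x : Fin 2) :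
    pr (polarPmf W₁ W₂) (fun ω => ω.1 + ω.2.1) x = 1 / 2 := by
  unfold pr polarPmf
  simp only [Fintype.sum_prod_type, sum_ite_const, Finset.sum_ite_eq', Finset.mem_univ,
    if_true]
  simp only [← Finset.sum_mul, ← Finset.mul_sum, hW₂sum, hW₁sum, mul_one]
  fin_cases x <;>
    simp only [Fin.sum_univ_two, fin2_cast.1,
      fin2_cast.2.1, fin2_cast.2.2.1, fin2_cast.2.2.2.1, fin2_cast.2.2.2.2, hW₁sum] <;>
    simp <;> ring_nf

lemma polar_total (hW₁sum : ∀ x, ∑ y, W₁ x y = 1) (hW₂sum : ∀ x, ∑ y, W₂ x y = 1) :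
    ∑ ω, polarPmf W₁ W₂ ω = 1 := by
  unfold polarPmf
  simp only [Fintype.sum_prod_type]
  simp only [← Finset.mul_sum, hW₂sum, mul_one]
  simp only [Fin.sum_univ_two, ← Finset.mul_sum, hW₁sum]
  norm_num

end Polar

lemma ent_bit {Ω : Type*} [Fintype Ω] (p : Ω → ℝ) (U : Ω → Fin 2)
    (h : ∀ u, pr p U u = 1 / 2) : ent p U = 1 := by
  unfold ent
  rw [Fin.sum_univ_two, h 0, h 1]
  have hl : Real.logb 2 (1 / 2 : ℝ) = -1 := by
    rw [one_div, Real.logb_inv, Real.logb_self_eq_one] <;> norm_num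
  rw [hl]; norm_num


/-- `I(U₁;Y₁Y₂) ≤ min(I(X₁;Y₁), I(X₂;Y₂)) ≤ max(I(X₁;Y₁), I(X₂;Y₂))
≤ I(U₂;Y₁Y₂U₁)` for the basic polar transform. -/
theorem polar_transform_polarizes {𝒴₁ 𝒴₂ : Type*}
    [Fintype 𝒴₁] [Fintype 𝒴₂] [DecidableEq 𝒴₁] [DecidableEq 𝒴₂]
    (W₁ : Fin 2 → 𝒴₁ → ℝ) (W₂ : Fin 2 → 𝒴₂ → ℝ)
    (hW₁ : ∀ x y, 0 ≤ W₁ x y) (hW₂ : ∀ x y, 0 ≤ W₂ x y)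
    (hW₁sum : ∀ x, ∑ y, W₁ x y = 1) (hW₂sum : ∀ x, ∑ y, W₂ x y = 1) :
    mi (polarPmf W₁ W₂) (fun ω => ω.1) (fun ω => (ω.2.2.1, ω.2.2.2))
      ≤ min (mi (polarPmf W₁ W₂) (fun ω => ω.1 + ω.2.1) (fun ω => ω.2.2.1))
            (mi (polarPmf W₁ W₂) (fun ω => ω.2.1) (fun ω => ω.2.2.2)) ∧
    min (mi (polarPmf W₁ W₂) (fun ω => ω.1 + ω.2.1) (fun ω => ω.2.2.1))
        (mi (polarPmf W₁ W₂) (fun ω => ω.2.1) (fun ω => ω.2.2.2))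
      ≤ max (mi (polarPmf W₁ W₂) (fun ω => ω.1 + ω.2.1) (fun ω => ω.2.2.1))
            (mi (polarPmf W₁ W₂) (fun ω => ω.2.1) (fun ω => ω.2.2.2)) ∧
    max (mi (polarPmf W₁ W₂) (fun ω => ω.1 + ω.2.1) (fun ω => ω.2.2.1))
        (mi (polarPmf W₁ W₂) (fun ω => ω.2.1) (fun ω => ω.2.2.2))
      ≤ mi (polarPmf W₁ W₂) (fun ω => ω.2.1) (fun ω => (ω.2.2.1, ω.2.2.2, ω.1)) := by
  set Ω := Fin 2 × Fin 2 × 𝒴₁ × 𝒴₂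
  set p : Ω → ℝ := polarPmf W₁ W₂ with hpdef
  have hp : ∀ ω, 0 ≤ p ω := fun ω => by
    have h1 := hW₁ (ω.1 + ω.2.1) ω.2.2.1
    have h2 := hW₂ ω.2.1 ω.2.2.2
    rw [hpdef]
    unfold polarPmf
    positivity
  have hsum : ∑ ω, p ω = 1 := polar_total W₁ W₂ hW₁sum hW₂sum
  -- uniform bits
  have eU1 : ent p (fun ω : Ω => ω.1) = 1 :=
    ent_bit p _ (pr_U1 W₁ W₂ hW₁sum hW₂sum)
  have eU2 : ent p (fun ω : Ω => ω.2.1) = 1 :=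
    ent_bit p _ (pr_U2 W₁ W₂ hW₁sum hW₂sum)
  have eX1 : ent p (fun ω : Ω => ω.1 + ω.2.1) = 1 :=
    ent_bit p _ (pr_X1 W₁ W₂ hW₁sum hW₂sum)
  -- independence of (Y₁, Y₂)
  have hYY : ∀ (a : 𝒴₁) (b : 𝒴₂),
      pr p (fun ω : Ω => (ω.2.2.1, ω.2.2.2)) (a, b)
        = pr p (fun ω : Ω => ω.2.2.1) a * pr p (fun ω : Ω => ω.2.2.2) b := by
    intro a b
    rw [pr_YY W₁ W₂ hW₁sum hW₂sum, pr_Y1 W₁ W₂ hW₂sum, pr_Y2 W₁ W₂ hW₁sum]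
  have eY : ent p (fun ω : Ω => (ω.2.2.1, ω.2.2.2))
      = ent p (fun ω : Ω => ω.2.2.1) + ent p (fun ω : Ω => ω.2.2.2) :=
    ent_pair_of_indep p hp hsum _ _ hYY
  -- independence of ((X₁,Y₁),(U₂,Y₂))
  have hBig : ∀ (a : Fin 2 × 𝒴₁) (b : Fin 2 × 𝒴₂),
      pr p (fun ω : Ω => ((ω.1 + ω.2.1, ω.2.2.1), (ω.2.1, ω.2.2.2))) (a, b)
        = pr p (fun ω : Ω => (ω.1 + ω.2.1, ω.2.2.1)) a
          * pr p (fun ω : Ω => (ω.2.1, ω.2.2.2)) b := by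
    rintro ⟨x, y₁⟩ ⟨u, y₂⟩
    rw [pr_big W₁ W₂ u x y₁ y₂, pr_X1Y1 W₁ W₂ hW₂sum, pr_U2Y2 W₁ W₂ hW₁sum]
  have eFull : ent p (fun ω : Ω => ((ω.1 + ω.2.1, ω.2.2.1), (ω.2.1, ω.2.2.2)))
      = ent p (fun ω : Ω => (ω.1 + ω.2.1, ω.2.2.1)) + ent p (fun ω : Ω => (ω.2.1, ω.2.2.2)) :=
    ent_pair_of_indep p hp hsum _ _ hBig
  -- injection identities
  have iT : ent p (fun ω : Ω => (ω.2.2.1, ω.2.2.2, ω.1))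
      = ent p (fun ω : Ω => (ω.1, (ω.2.2.1, ω.2.2.2))) :=
    ent_comp_inj p (fun ω : Ω => (ω.1, (ω.2.2.1, ω.2.2.2)))
      (fun q => (q.2.1, q.2.2, q.1))
      (fun q q' h => by
        simp only [Prod.mk.injEq] at h
        exact Prod.ext h.2.2 (Prod.ext h.1 h.2.1))
  have iUT : ent p (fun ω : Ω => (ω.2.1, (ω.2.2.1, ω.2.2.2, ω.1))) = ent p (fun ω : Ω => ω) :=
    ent_comp_inj p (fun ω : Ω => ω)
      (fun ω : Ω => (ω.2.1, (ω.2.2.1, ω.2.2.2, ω.1)))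
      (fun ω ω' h => by
        simp only [Prod.mk.injEq] at h
        exact Prod.ext h.2.2.2 (Prod.ext h.1 (Prod.ext h.2.1 h.2.2.1)))
  have iBig : ent p (fun ω : Ω => ((ω.1 + ω.2.1, ω.2.2.1), (ω.2.1, ω.2.2.2)))
      = ent p (fun ω : Ω => ω) :=
    ent_comp_inj p (fun ω : Ω => ω)
      (fun ω : Ω => ((ω.1 + ω.2.1, ω.2.2.1), (ω.2.1, ω.2.2.2)))
      (fun ω ω' h => by
        simp only [Prod.mk.injEq] at h
        obtain ⟨⟨hx, hy1⟩, hu2, hy2⟩ := h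
        rw [hu2] at hx
        exact Prod.ext (add_right_cancel hx) (Prod.ext hu2 (Prod.ext hy1 hy2)))
  have iG1 : ent p (fun ω : Ω => (ω.2.1, (ω.1, (ω.2.2.1, ω.2.2.2)))) = ent p (fun ω : Ω => ω) :=
    ent_comp_inj p (fun ω : Ω => ω)
      (fun ω : Ω => (ω.2.1, (ω.1, (ω.2.2.1, ω.2.2.2))))
      (fun ω ω' h => by
        simp only [Prod.mk.injEq] at h
        exact Prod.ext h.2.1 (Prod.ext h.1 (Prod.ext h.2.2.1 h.2.2.2)))
  have iG2 : ent p (fun ω : Ω => (ω.1 + ω.2.1, (ω.1, (ω.2.2.1, ω.2.2.2))))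
      = ent p (fun ω : Ω => ω) :=
    ent_comp_inj p (fun ω : Ω => ω)
      (fun ω : Ω => (ω.1 + ω.2.1, (ω.1, (ω.2.2.1, ω.2.2.2))))
      (fun ω ω' h => by
        simp only [Prod.mk.injEq] at h
        obtain ⟨hx, h1, h23⟩ := h
        rw [h1] at hx
        exact Prod.ext h1 (Prod.ext (add_left_cancel hx) (Prod.ext h23.1 h23.2)))
  -- the two conditioning inequalities
  have g1 : ent p (fun ω : Ω => (ω.2.1, (ω.1, (ω.2.2.1, ω.2.2.2))))
        - ent p (fun ω : Ω => (ω.1, (ω.2.2.1, ω.2.2.2)))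
      ≤ ent p (fun ω : Ω => (ω.2.1, ω.2.2.2)) - ent p (fun ω : Ω => ω.2.2.2) :=
    cond_ent_le p hp hsum (fun ω : Ω => ω.2.1)
      (fun ω : Ω => (ω.1, (ω.2.2.1, ω.2.2.2))) (fun q => q.2.2)
  have g2 : ent p (fun ω : Ω => (ω.1 + ω.2.1, (ω.1, (ω.2.2.1, ω.2.2.2))))
        - ent p (fun ω : Ω => (ω.1, (ω.2.2.1, ω.2.2.2)))
      ≤ ent p (fun ω : Ω => (ω.1 + ω.2.1, ω.2.2.1)) - ent p (fun ω : Ω => ω.2.2.1) :=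
    cond_ent_le p hp hsum (fun ω : Ω => ω.1 + ω.2.1)
      (fun ω : Ω => (ω.1, (ω.2.2.1, ω.2.2.2))) (fun q => q.2.1)
  rw [iG1] at g1
  rw [iG2] at g2
  rw [iBig] at eFull
  simp only [mi]
  rw [eU1, eU2, eX1, eY, iT, iUT]
  refine ⟨le_min (by linarith) (by linarith), ?_, max_le (by linarith) (by linarith)⟩
  exact (min_le_left _ _).trans (le_max_left _ _)
end
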